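/- Let R be a commutative ℚ-algebra, (I_k)_{k≥1} an increasing family of ℚ-subspaces of R (I_k ⊆ I_{k+1}) satisfying I_k · I_ℓ ⊆ I_{k+ℓ}. Let c_1, c_2, c_3, … and ch_1, ch_2, … be elements of R such that: (i) ch_m ∈ I_1 for all m ≥ 1; (ii) c_1 = ch_1; (iii) for every k and every γ ∈ I_k, γ·c_1 ∈ I_k; (iv) for each m ≥ 2, c_m − (−1)^{m−1}(m−1)!·ch_m is a ℚ-linear combination of monomials c_{i_1}⋯c_{i_r} with all i_j ≤ m−1 and i_1 + ⋯ + i_r = m. Then c_m ∈ I_{⌊m/2⌋} for every m ≥ 2. -/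

import Mathlib

/-!
Strong induction on `m`. By induction `c i ∈ I (i / 2)` for `2 ≤ i < m`, while right multiplication
by `c 1` preserves every `I k`; so in a monomial `c i₁ ⋯ c iᵣ` with `∑ iⱼ = m` the factor `c iⱼ`
raises the filtration level by `iⱼ / 2`, and the monomial lands in
`I (max 1 (∑ iⱼ / 2)) ≤ I (m / 2)`. The remaining term of `c m` is a multiple of `ch m ∈ I 1`.
-/

theorem List.sum_map_div_le (l : List ℕ) (n : ℕ) : (l.map (· / n)).sum ≤ l.sum / n := by
  induction l with
  | nil => simp
  | cons a l ih =>
    simp only [List.map_cons, List.sum_cons]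
    exact (Nat.add_le_add_left ih _).trans Nat.div_add_div_le_add_div

section Filtration

variable {M S ι : Type*} [SetLike S M] (F : ℕ → S)

def RightMulRaises [Mul M] (x : M) (n : ℕ) : Prop :=
  ∀ k, 1 ≤ k → ∀ γ ∈ F k, γ * x ∈ F (k + n)

variable {F}

theorem RightMulRaises.list_prod [Monoid M] {c : ι → M} {w : ι → ℕ} {l : List ι}
    (h : ∀ i ∈ l, RightMulRaises F (c i) (w i)) :
    RightMulRaises F (l.map c).prod (l.map w).sum := by
  induction l with
  | nil => intro k _ γ hγ; simpa using hγ
  | cons i l ih =>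
    intro k hk γ hγ
    have hi := h i List.mem_cons_self k hk γ hγ
    have hl := ih (fun j hj => h j (List.mem_cons_of_mem i hj)) (k + w i) (by omega) _ hi
    simpa only [List.map_cons, List.prod_cons, List.sum_cons, mul_assoc, add_assoc] using hl

/-- Starting the product at a factor of maximal weight: either that weight is positive, or all
weights vanish and the first factor alone accounts for the level `1`. -/
theorem list_prod_mem_max_one_sum [CommMonoid M] {c : ι → M} {w : ι → ℕ} {l : List ι}
    (hl : l ≠ []) (hraise : ∀ i ∈ l, RightMulRaises F (c i) (w i))
    (hmem : ∀ i ∈ l, c i ∈ F (max 1 (w i))) :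
    (l.map c).prod ∈ F (max 1 (l.map w).sum) := by
  classical
  obtain ⟨i, hi, hmax⟩ := l.toFinset.exists_max_image w (List.toFinset_nonempty_iff l |>.mpr hl)
  rw [List.mem_toFinset] at hi
  have hperm := List.perm_cons_erase hi
  have hrest := RightMulRaises.list_prod (l := l.erase i)
    (fun j hj => hraise j (List.mem_of_mem_erase hj)) _ (le_max_left _ _) _ (hmem i hi)
  have hzero : w i = 0 → ((l.erase i).map w).sum = 0 := by
    intro hwi
    refine List.sum_eq_zero fun n hn => ?_
    obtain ⟨j, hj, rfl⟩ := List.mem_map.mp hn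
    have := hmax j (List.mem_toFinset.mpr (List.mem_of_mem_erase hj))
    omega
  rw [(hperm.map c).prod_eq, (hperm.map w).sum_eq]
  simp only [List.map_cons, List.prod_cons, List.sum_cons]
  convert hrest using 2
  omega

end Filtration

theorem chern_class_mem_filtration {R : Type*} [CommRing R] [Algebra ℚ R]
    (I : ℕ → Submodule ℚ R)
    (hmono : ∀ k, 1 ≤ k → I k ≤ I (k + 1))
    (hmul : ∀ k ℓ, 1 ≤ k → 1 ≤ ℓ → ∀ x ∈ I k, ∀ y ∈ I ℓ, x * y ∈ I (k + ℓ))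
    (c ch : ℕ → R)
    (hch : ∀ m, 1 ≤ m → ch m ∈ I 1)
    (hc1 : c 1 = ch 1)
    (hdiv : ∀ k, ∀ γ ∈ I k, γ * c 1 ∈ I k)
    (hrel : ∀ m, 2 ≤ m →
      c m - ((-1 : ℚ) ^ (m - 1) * (m - 1).factorial) • ch m ∈
        Submodule.span ℚ { x : R | ∃ l : List ℕ,
          (∀ i ∈ l, 1 ≤ i ∧ i ≤ m - 1) ∧ l.sum = m ∧ x = (l.map c).prod }) :
    ∀ m, 2 ≤ m → c m ∈ I (m / 2) := by
  have hmonoOn := monotoneOn_nat_Ici_of_le_succ hmono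
  intro m
  induction m using Nat.strong_induction_on with
  | _ m ih =>
  intro hm
  have hm2 : 1 ≤ m / 2 := by omega
  have hraise : ∀ i, 1 ≤ i → i < m → RightMulRaises I (c i) (i / 2) := by
    intro i hi him k hk γ hγ
    rcases hi.eq_or_lt with rfl | hi
    · exact hdiv k γ hγ
    · exact hmul k _ hk (by omega) γ hγ _ (ih i him hi)
  have hmem : ∀ i, 1 ≤ i → i < m → c i ∈ I (max 1 (i / 2)) := by
    intro i hi him
    rcases hi.eq_or_lt with rfl | hi
    · exact hc1 ▸ hch 1 le_rfl
    · rw [max_eq_right (by omega)]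
      exact ih i him hi
  have hspan : Submodule.span ℚ { x : R | ∃ l : List ℕ,
      (∀ i ∈ l, 1 ≤ i ∧ i ≤ m - 1) ∧ l.sum = m ∧ x = (l.map c).prod } ≤ I (m / 2) := by
    rw [Submodule.span_le]
    rintro _ ⟨l, hl, hsum, rfl⟩
    have hl0 : l ≠ [] := by rintro rfl; simp at hsum; omega
    have hlt : ∀ i ∈ l, 1 ≤ i ∧ i < m := fun i hi => by have := hl i hi; omega
    refine hmonoOn (le_max_left 1 _) hm2 ?_ (list_prod_mem_max_one_sum hl0
      (fun i hi => hraise i (hlt i hi).1 (hlt i hi).2)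
      (fun i hi => hmem i (hlt i hi).1 (hlt i hi).2))
    have := l.sum_map_div_le 2
    omega
  rw [← sub_add_cancel (c m) (((-1 : ℚ) ^ (m - 1) * (m - 1).factorial) • ch m)]
  exact add_mem (hspan (hrel m hm))
    (Submodule.smul_mem _ _ (hmonoOn (le_refl 1) hm2 (by omega) (hch m (by omega))))
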